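/- For a distribution with finite right endpoint η and CDF of the form F(x) = Φ(x)/Φ(η) on (-∞, η): with a_n = η - F^{-1}(1-1/n), one has n(1 - F(η + a_n x)) → -x for every x ≤ 0, and hence [F(η + a_n x)]^n → e^{x} for x ≤ 0. -/

import Mathlib

open MeasureTheory ProbabilityTheory Filter Real Topology

noncomputable def Phi (x : ℝ) : ℝ := ((gaussianReal 0 1) (Set.Iic x)).toReal

noncomputable def stdphi (x : ℝ) : ℝ := gaussianPDFReal 0 1 x

noncomputable def PhiInv (p : ℝ) : ℝ := Function.invFun Phi p

noncomputable def truncQuantile (η p : ℝ) : ℝ := PhiInv (p * Phi η)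

/-!
Since `Φ` is differentiable at `η` with `Φ'(η) = φ(η) > 0`, increments of `Φ` at `η` on
comparable scales have asymptotically proportional sizes. The scale `a_n` is exactly the one with
`Φ(η) - Φ(η - a_n) = Φ(η)/n`, so `n (1 - F(η + a_n x))` is the ratio of the increments of `Φ` on
the scales `a_n |x|` and `a_n`, which tends to `-x` as `a_n → 0⁺`. The second limit is then
`(1 + y_n / n)^n → e^{lim y_n}`. Below, `truncCDF η` is `F` and `truncScale η n` is `a_n`.
-/

noncomputable def truncCDF (η y : ℝ) : ℝ := if y < η then Phi y / Phi η else 1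

noncomputable def truncScale (η : ℝ) (n : ℕ) : ℝ := η - truncQuantile η (1 - 1 / n)

lemma stdphi_pos (x : ℝ) : 0 < stdphi x := gaussianPDFReal_pos 0 1 x one_ne_zero

lemma continuous_stdphi : Continuous stdphi := by
  unfold stdphi
  rw [gaussianPDFReal_def]
  fun_prop

lemma Phi_eq_cdf : Phi = cdf (gaussianReal 0 1) := by
  funext x
  rw [cdf_eq_real]
  rfl

lemma Phi_sub_Phi (a b : ℝ) : Phi b - Phi a = ∫ t in a..b, stdphi t := by
  have hPhi (x : ℝ) : Phi x = ∫ t in Set.Iic x, stdphi t := by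
    rw [Phi, gaussianReal_apply_eq_integral 0 one_ne_zero,
      ENNReal.toReal_ofReal (integral_nonneg fun t => gaussianPDFReal_nonneg _ _ _)]
    rfl
  have hint : Integrable stdphi := integrable_gaussianPDFReal 0 1
  rw [hPhi, hPhi, intervalIntegral.integral_Iic_sub_Iic hint.integrableOn hint.integrableOn]

lemma hasDerivAt_Phi (x : ℝ) : HasDerivAt Phi (stdphi x) x := by
  have hPhi : Phi = fun u => Phi 0 + ∫ t in (0 : ℝ)..u, stdphi t := by
    funext u
    rw [← Phi_sub_Phi]
    ring
  rw [hPhi]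
  exact (continuous_stdphi.integral_hasStrictDerivAt 0 x).hasDerivAt.const_add _

lemma continuous_Phi : Continuous Phi :=
  continuous_iff_continuousAt.2 fun x => (hasDerivAt_Phi x).continuousAt

lemma Phi_strictMono : StrictMono Phi :=
  strictMono_of_hasDerivAt_pos hasDerivAt_Phi stdphi_pos

lemma Phi_pos (x : ℝ) : 0 < Phi x :=
  (Phi_eq_cdf ▸ cdf_nonneg _ (x - 1)).trans_lt (Phi_strictMono (sub_one_lt x))

lemma Phi_lt_one (x : ℝ) : Phi x < 1 :=
  (Phi_strictMono (lt_add_one x)).trans_le (Phi_eq_cdf ▸ cdf_le_one _ (x + 1))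

lemma Phi_PhiInv {p : ℝ} (hp0 : 0 < p) (hp1 : p < 1) : Phi (PhiInv p) = p := by
  refine Function.invFun_eq (mem_range_of_exists_le_of_exists_ge continuous_Phi ?_ ?_)
  · rw [Phi_eq_cdf]
    obtain ⟨a, ha⟩ := ((tendsto_cdf_atBot _).eventually (eventually_lt_nhds hp0)).exists
    exact ⟨a, ha.le⟩
  · rw [Phi_eq_cdf]
    obtain ⟨b, hb⟩ := ((tendsto_cdf_atTop _).eventually (eventually_gt_nhds hp1)).exists
    exact ⟨b, hb.le⟩

lemma Phi_truncQuantile {η p : ℝ} (hp0 : 0 < p) (hp1 : p ≤ 1) :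
    Phi (truncQuantile η p) = p * Phi η :=
  Phi_PhiInv (mul_pos hp0 (Phi_pos η))
    ((mul_le_of_le_one_left (Phi_pos η).le hp1).trans_lt (Phi_lt_one η))

lemma truncQuantile_lt {η p : ℝ} (hp0 : 0 < p) (hp1 : p < 1) : truncQuantile η p < η := by
  rw [← Phi_strictMono.lt_iff_lt, Phi_truncQuantile hp0 hp1.le]
  exact mul_lt_of_lt_one_left (Phi_pos η) hp1

lemma truncCDF_of_le {η y : ℝ} (hy : y ≤ η) : truncCDF η y = Phi y / Phi η := by
  rcases hy.lt_or_eq with hy | rfl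
  · exact if_pos hy
  · exact (if_neg (lt_irrefl y)).trans (div_self (Phi_pos y).ne').symm

lemma StrictMono.tendsto_of_tendsto_apply {α β ι : Type*} [LinearOrder α] [TopologicalSpace α]
    [OrderTopology α] [Preorder β] [TopologicalSpace β] [OrderTopology β] {f : α → β}
    (hf : StrictMono f) {l : Filter ι} {y : ι → α} {a : α}
    (h : Tendsto (fun i => f (y i)) l (𝓝 (f a))) : Tendsto y l (𝓝 a) := by
  rw [tendsto_order] at h ⊢
  exact ⟨fun b hb => (h.1 _ (hf hb)).mono fun i hi => hf.lt_iff_lt.1 hi,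
    fun b hb => (h.2 _ (hf hb)).mono fun i hi => hf.lt_iff_lt.1 hi⟩

lemma eventually_one_sub_inv_mem_Ioo : ∀ᶠ n : ℕ in atTop, 1 - 1 / (n : ℝ) ∈ Set.Ioo 0 1 := by
  filter_upwards [eventually_ge_atTop 2] with n hn
  have hn' : (2 : ℝ) ≤ n := by exact_mod_cast hn
  constructor
  · rw [sub_pos, div_lt_one (by linarith)]
    linarith
  · simp only [sub_lt_self_iff]
    positivity

lemma eventually_Phi_sub_truncScale (η : ℝ) :
    ∀ᶠ n : ℕ in atTop, Phi (η - truncScale η n) = (1 - 1 / n) * Phi η := by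
  filter_upwards [eventually_one_sub_inv_mem_Ioo] with n hn
  rw [truncScale, sub_sub_cancel, Phi_truncQuantile hn.1 hn.2.le]

lemma tendsto_truncScale (η : ℝ) : Tendsto (truncScale η) atTop (𝓝[>] 0) := by
  have hp : Tendsto (fun n : ℕ => 1 - 1 / (n : ℝ)) atTop (𝓝 1) := by
    simpa using (tendsto_const_nhds (x := (1 : ℝ))).sub tendsto_one_div_atTop_nhds_zero_nat
  have hq : Tendsto (fun n : ℕ => η - truncScale η n) atTop (𝓝 η) := by
    refine Phi_strictMono.tendsto_of_tendsto_apply ?_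
    have hlim := hp.mul_const (Phi η)
    rw [one_mul] at hlim
    exact hlim.congr' ((eventually_Phi_sub_truncScale η).mono fun n hn => hn.symm)
  refine tendsto_nhdsWithin_iff.2 ⟨?_, ?_⟩
  · simpa using (tendsto_const_nhds (x := η)).sub hq
  · filter_upwards [eventually_one_sub_inv_mem_Ioo] with n hn
    exact sub_pos.2 (truncQuantile_lt hn.1 hn.2)

lemma HasDerivAt.tendsto_sub_div_sub {f : ℝ → ℝ} {f' a : ℝ} (hf : HasDerivAt f f' a)
    (hf' : f' ≠ 0) {ι : Type*} {l : Filter ι} {h : ι → ℝ} (hh : Tendsto h l (𝓝[≠] 0)) (x : ℝ) :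
    Tendsto (fun i => (f (a - h i * x) - f a) / (f (a - h i) - f a)) l (𝓝 x) := by
  rcases eq_or_ne x 0 with rfl | hx
  · simpa using tendsto_const_nhds
  have hh0 : ∀ᶠ i in l, h i ≠ 0 := (tendsto_nhdsWithin_iff.1 hh).2
  have hpts {c : ℝ} (hc : c ≠ 0) : Tendsto (fun i => a - h i * c) l (𝓝[≠] a) := by
    refine tendsto_nhdsWithin_iff.2 ⟨?_, hh0.mono fun i hi => ?_⟩
    · simpa using tendsto_const_nhds.sub ((tendsto_nhds_of_tendsto_nhdsWithin hh).mul_const c)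
    · simpa using mul_ne_zero hi hc
  have hslope := hasDerivAt_iff_tendsto_slope.1 hf
  have hlim := ((hslope.comp (hpts hx)).div (hslope.comp (hpts one_ne_zero)) hf').const_mul x
  rw [div_self hf', mul_one] at hlim
  refine hlim.congr' (hh0.mono fun i hi => ?_)
  simp only [Pi.div_apply, Function.comp_apply, slope_def_field, mul_one, sub_sub_cancel_left]
  rcases eq_or_ne (f (a - h i) - f a) 0 with hB | hB
  · simp [hB]
  field_simp

/-- For the truncated normal CDF F(x) = Φ(x)/Φ(η) for x < η (and 1 for x ≥ η),
with a_n = η - F⁻¹(1-1/n), one has n(1 - F(η + a_n x)) → -x for every x ≤ 0,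
and hence [F(η + a_n x)]^n → e^x for x ≤ 0. -/
theorem stmt19 (η : ℝ) (x : ℝ) (hx : x ≤ 0) :
    Filter.Tendsto (fun n : ℕ =>
      n * (1 - (if η + (η - truncQuantile η (1 - 1 / n)) * x < η
        then Phi (η + (η - truncQuantile η (1 - 1 / n)) * x) / Phi η else 1)))
      Filter.atTop (nhds (-x)) ∧
    Filter.Tendsto (fun n : ℕ =>
      (if η + (η - truncQuantile η (1 - 1 / n)) * x < η
        then Phi (η + (η - truncQuantile η (1 - 1 / n)) * x) / Phi η else 1) ^ n)
      Filter.atTop (nhds (Real.exp x)) := by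
  change Tendsto (fun n : ℕ => n * (1 - truncCDF η (η + truncScale η n * x))) atTop (𝓝 (-x)) ∧
    Tendsto (fun n : ℕ => truncCDF η (η + truncScale η n * x) ^ n) atTop (𝓝 (exp x))
  have hlim : Tendsto (fun n : ℕ => n * (1 - truncCDF η (η + truncScale η n * x)))
      atTop (𝓝 (-x)) := by
    have hratio := (hasDerivAt_Phi η).tendsto_sub_div_sub (stdphi_pos η).ne'
      ((tendsto_truncScale η).mono_right (nhdsGT_le_nhdsNE 0)) (-x)
    refine hratio.congr' ?_
    filter_upwards [eventually_Phi_sub_truncScale η, tendsto_truncScale η self_mem_nhdsWithin,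
      eventually_ne_atTop 0] with n hΦ (hpos : 0 < truncScale η n) hn
    rw [truncCDF_of_le (by nlinarith), mul_neg, sub_neg_eq_add, hΦ]
    have := (Phi_pos η).ne'
    field_simp
    ring
  refine ⟨hlim, ?_⟩
  have hlim' : Tendsto (fun n : ℕ => n * (truncCDF η (η + truncScale η n * x) - 1))
      atTop (𝓝 x) := by
    simpa only [neg_neg, ← mul_neg, neg_sub] using hlim.neg
  simpa using Real.tendsto_one_add_pow_exp_of_tendsto hlim'
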